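/- The optimal k-medoids objective is at most 4 times the optimal k-means objective. -/
import Mathlib


/-- The optimal k-medoids objective is at most 4 times the optimal k-means objective. -/
theorem kmedoids_le_four_kmeans (d k : ℕ) (hk : 1 ≤ k)
    (X : Finset (EuclideanSpace ℝ (Fin d))) (hX : X.Nonempty) :
    sInf {c : ℝ | ∃ (z : {x // x ∈ X} → Fin k) (μ : Fin k → EuclideanSpace ℝ (Fin d)),
        (∀ j, μ j ∈ X) ∧ c = ∑ x ∈ X.attach, ‖x.1 - μ (z x)‖ ^ 2} ≤
    4 * sInf {c : ℝ | ∃ (z : {x // x ∈ X} → Fin k) (μ : Fin k → EuclideanSpace ℝ (Fin d)),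
        c = ∑ x ∈ X.attach, ‖x.1 - μ (z x)‖ ^ 2} := by
  classical
  set S : Set ℝ := {c : ℝ | ∃ (z : {x // x ∈ X} → Fin k) (μ : Fin k → EuclideanSpace ℝ (Fin d)),
      (∀ j, μ j ∈ X) ∧ c = ∑ x ∈ X.attach, ‖x.1 - μ (z x)‖ ^ 2} with hS
  set T : Set ℝ := {c : ℝ | ∃ (z : {x // x ∈ X} → Fin k) (μ : Fin k → EuclideanSpace ℝ (Fin d)),
      c = ∑ x ∈ X.attach, ‖x.1 - μ (z x)‖ ^ 2} with hT
  have hTne : T.Nonempty := by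
    exact ⟨_, fun _ => ⟨0, hk⟩, fun _ => hX.choose, rfl⟩
  have hSbdd : BddBelow S := by
    refine ⟨0, fun c hc => ?_⟩
    obtain ⟨z, μ, _, rfl⟩ := hc
    positivity
  have main : ∀ t ∈ T, sInf S ≤ 4 * t := by
    rintro t ⟨z, μ, rfl⟩
    have key : ∀ j : Fin k, ∃ m ∈ X, ∀ x ∈ X.attach, z x = j → ‖m - μ j‖ ≤ ‖x.1 - μ j‖ := by
      intro j
      by_cases h : ((X.attach.filter (fun x => z x = j)).Nonempty)
      · obtain ⟨m, hm, hmin⟩ := Finset.exists_min_image _ (fun x => ‖x.1 - μ j‖) h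
        exact ⟨m.1, m.2, fun x hx hzx => hmin x (Finset.mem_filter.2 ⟨hx, hzx⟩)⟩
      · exact ⟨hX.choose, hX.choose_spec,
          fun x hx hzx => absurd ⟨x, Finset.mem_filter.2 ⟨hx, hzx⟩⟩ h⟩
    choose m hmX hmin using key
    have hmem : (∑ x ∈ X.attach, ‖x.1 - m (z x)‖ ^ 2) ∈ S :=
      ⟨z, fun j => m j, hmX, rfl⟩
    have hle : (∑ x ∈ X.attach, ‖x.1 - m (z x)‖ ^ 2)
        ≤ ∑ x ∈ X.attach, 4 * ‖x.1 - μ (z x)‖ ^ 2 := by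
      refine Finset.sum_le_sum fun x hx => ?_
      have hb : ‖m (z x) - μ (z x)‖ ≤ ‖x.1 - μ (z x)‖ := hmin (z x) x hx rfl
      have htri : ‖x.1 - m (z x)‖ ≤ ‖x.1 - μ (z x)‖ + ‖m (z x) - μ (z x)‖ := by
        have := norm_sub_le_norm_sub_add_norm_sub x.1 (μ (z x)) (m (z x))
        simpa [norm_sub_rev (μ (z x)) (m (z x))] using this
      have hA : ‖x.1 - m (z x)‖ ≤ 2 * ‖x.1 - μ (z x)‖ := by linarith
      have h0 : (0:ℝ) ≤ ‖x.1 - m (z x)‖ := norm_nonneg _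
      nlinarith [norm_nonneg (x.1 - μ (z x))]
    calc sInf S ≤ _ := csInf_le hSbdd hmem
      _ ≤ _ := hle
      _ = 4 * ∑ x ∈ X.attach, ‖x.1 - μ (z x)‖ ^ 2 := by rw [Finset.mul_sum]
  have h4 : sInf S / 4 ≤ sInf T :=
    le_csInf hTne fun t ht => by linarith [main t ht]
  linarith
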